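/- For all positive integers k₁,…,k_r, ψ̄(z_{k₁}⋯z_{k_r}) = Σ_{i=1}^{r} (−1)^{r−i+1} k_i (z_{k₁}⋯z_{k_{i−1}} ш̃ z_{k_r}⋯z_{k_{i+1}}) z_{k_i+1}. -/

import Mathlib

open scoped BigOperators

/-- `H¹`: the ℚ-vector space with basis the words `z_{k₁}⋯z_{k_r}` in the letters
`z_k` (`k` a positive integer), encoded as finitely supported functions on lists. -/
abbrev H1 : Type := List ℕ+ →₀ ℚ

/-- The basis word `z_{k₁}⋯z_{k_r}` of `H¹` (the empty list is the unit `1`). -/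
noncomputable def W (l : List ℕ+) : H1 := Finsupp.single l 1

/-- Left multiplication by the letter `z_k` (linear extension of `w ↦ z_k w`). -/
noncomputable def consL (k : ℕ+) (h : H1) : H1 := Finsupp.mapDomain (fun w => k :: w) h

/-- Right multiplication by the letter `z_k` (linear extension of `w ↦ w z_k`). -/
noncomputable def mulRk (k : ℕ+) (h : H1) : H1 := Finsupp.mapDomain (fun w => w ++ [k]) h

/-- The harmonic (stuffle) product on words:
`1 ∗ u = u ∗ 1 = u`, `z_k u ∗ z_l v = z_k(u ∗ z_l v) + z_l(z_k u ∗ v) + z_{k+l}(u ∗ v)`. -/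
noncomputable def harmW : List ℕ+ → List ℕ+ → H1
  | [], v => W v
  | u, [] => W u
  | k :: u, l :: v =>
      consL k (harmW u (l :: v)) + consL l (harmW (k :: u) v) + consL (k + l) (harmW u v)
  termination_by u v => u.length + v.length

/-- The harmonic product `∗` on `H¹`, as the ℚ-bilinear extension of `harmW`. -/
noncomputable def harm (g h : H1) : H1 :=
  g.sum fun u c => h.sum fun v d => (c * d) • harmW u v

/-- The product `ш̃` on words in the letters `z_k`:
`1 ш̃ u = u ш̃ 1 = u`, `z_k u ш̃ z_l v = z_k(u ш̃ z_l v) + z_l(z_k u ш̃ v)`. -/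
noncomputable def shtW : List ℕ+ → List ℕ+ → H1
  | [], v => W v
  | u, [] => W u
  | k :: u, l :: v => consL k (shtW u (l :: v)) + consL l (shtW (k :: u) v)
  termination_by u v => u.length + v.length

/-- The shuffle product `ш̃` on `H¹` (on the alphabet `z₁, z₂, …`), bilinear extension. -/
noncomputable def sht (g h : H1) : H1 :=
  g.sum fun u c => h.sum fun v d => (c * d) • shtW u v

/-- Addition of a natural number to a positive natural number. -/
def pplus (k : ℕ+) (e : ℕ) : ℕ+ := ⟨(k : ℕ) + e, by have := k.pos; omega⟩

/-- `σ_m` on words: `σ_m(z_{k₁}⋯z_{k_r}) = Σ_{e₁+⋯+e_r=m} ∏_j C(k_j+e_j-1, e_j) z_{k₁+e₁}⋯z_{k_r+e_r}`,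
which is the word formula for `σ_m(1) = δ_{m,0}`, `σ_m(yw) = y(w ш x^m)`. -/
noncomputable def sigW : ℕ → List ℕ+ → H1
  | m, [] => if m = 0 then W [] else 0
  | m, k :: ks => ∑ e ∈ Finset.range (m + 1),
      ((((k : ℕ) + e - 1).choose e : ℚ)) • consL (pplus k e) (sigW (m - e) ks)
  termination_by m ks => ks.length

/-- `σ_m : H¹ → H¹`, linear extension. -/
noncomputable def sig (m : ℕ) (h : H1) : H1 := h.sum fun ks c => c • sigW m ks

/-- `S` on words: the word formula for `S(1) = 1`, `S(yw) = y S₁(w)` where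
`S₁(x) = x`, `S₁(y) = x + y`; explicitly `S(z_{k₁}⋯z_{k_r})` is the sum over all ways of
replacing separating commas by `+`. -/
noncomputable def StW : List ℕ+ → H1
  | [] => W []
  | [k] => W [k]
  | k :: l :: ks => consL k (StW (l :: ks)) + StW ((k + l) :: ks)
  termination_by ks => ks.length

/-- `S : H¹ → H¹`, linear extension. -/
noncomputable def St (h : H1) : H1 := h.sum fun ks c => c • StW ks

/-- `S̃ = S ∘ d` on words, where `d(x) = x`, `d(y) = -y`, so `d` multiplies a word of
depth `r` by `(-1)^r`. -/
noncomputable def SttW (ks : List ℕ+) : H1 := ((-1 : ℚ)) ^ ks.length • StW ks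

/-- `S̃ = S ∘ d : H¹ → H¹`, linear extension. -/
noncomputable def Stt (h : H1) : H1 := h.sum fun ks c => c • SttW ks

/-- `ψ` on words: `ψ(z_{k₁}⋯z_{k_r}) = Σ_{i=0}^{r-1} z_{k₁}⋯z_{k_i} ∗ S̃(σ₁(z_{k_r}⋯z_{k_{i+1}}))`. -/
noncomputable def psiW (ks : List ℕ+) : H1 :=
  ∑ i ∈ Finset.range ks.length, harm (W (ks.take i)) (Stt (sigW 1 ((ks.drop i).reverse)))

/-- `ψ : yH → H¹`, linear extension. -/
noncomputable def psi (h : H1) : H1 := h.sum fun ks c => c • psiW ks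

/-- `ψ̄` on words: `ψ̄(z_{k₁}⋯z_{k_r}) = Σ_{i=0}^{r-1} (-1)^{r-i} z_{k₁}⋯z_{k_i} ш̃ σ₁(z_{k_r}⋯z_{k_{i+1}})`. -/
noncomputable def psibW (ks : List ℕ+) : H1 :=
  ∑ i ∈ Finset.range ks.length,
    ((-1 : ℚ)) ^ (ks.length - i) • sht (W (ks.take i)) (sigW 1 ((ks.drop i).reverse))

/-- `ψ̄ : yH → H¹`, linear extension. -/
noncomputable def psib (h : H1) : H1 := h.sum fun ks c => c • psibW ks

/-- `ρ` on words:
`ρ(z_{k₁}⋯z_{k_r}) = Σ_{i=1}^{r} (-1)^{r-i} (z_{k₁}⋯z_{k_{i-1}} ш̃ z_{k_r}⋯z_{k_{i+1}}) z_{k_i}`. -/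
noncomputable def rhoW (ks : List ℕ+) : H1 :=
  ∑ i : Fin ks.length, ((-1 : ℚ)) ^ (ks.length - 1 - (i : ℕ)) •
    mulRk (ks.get i) (sht (W (ks.take (i : ℕ))) (W ((ks.drop ((i : ℕ) + 1)).reverse)))

/-- `ρ : yH → yH`, linear extension. -/
noncomputable def rho (h : H1) : H1 := h.sum fun ks c => c • rhoW ks

/-- `yH ⊆ H¹`: the span of the nonempty words `z_{k₁}⋯z_{k_r}` (`r ≥ 1`). -/
noncomputable def yH1 : Submodule ℚ H1 := Submodule.span ℚ {h | ∃ k ks, h = W (k :: ks)}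

/-- `yH ∗ yH`: the ℚ-span of the harmonic products `w₁ ∗ w₂` with `w₁, w₂ ∈ yH`. -/
noncomputable def harmSpan : Submodule ℚ H1 :=
  Submodule.span ℚ {h | ∃ u ∈ yH1, ∃ v ∈ yH1, h = harm u v}

/-- `yH ш̃ yH`: the ℚ-span of the products `w₁ ш̃ w₂` with `w₁, w₂ ∈ yH`. -/
noncomputable def shtSpan : Submodule ℚ H1 :=
  Submodule.span ℚ {h | ∃ u ∈ yH1, ∃ v ∈ yH1, h = sht u v}

section Lemmas0
open Finsupp

lemma consL_W (k : ℕ+) (l : List ℕ+) : consL k (W l) = W (k :: l) := by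
  simp [consL, W, Finsupp.mapDomain_single]

lemma mulRk_W (k : ℕ+) (l : List ℕ+) : mulRk k (W l) = W (l ++ [k]) := by
  simp [mulRk, W, Finsupp.mapDomain_single]

lemma consL_add (k : ℕ+) (g h : H1) : consL k (g + h) = consL k g + consL k h := by
  simp [consL, Finsupp.mapDomain_add]

lemma consL_smul (k : ℕ+) (c : ℚ) (h : H1) : consL k (c • h) = c • consL k h := by
  simp [consL, Finsupp.mapDomain_smul]

lemma mulRk_add (k : ℕ+) (g h : H1) : mulRk k (g + h) = mulRk k g + mulRk k h := by
  simp [mulRk, Finsupp.mapDomain_add]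

lemma mulRk_smul (k : ℕ+) (c : ℚ) (h : H1) : mulRk k (c • h) = c • mulRk k h := by
  simp [mulRk, Finsupp.mapDomain_smul]

lemma consL_zero (k : ℕ+) : consL k 0 = 0 := by simp [consL]

lemma mulRk_zero (k : ℕ+) : mulRk k 0 = 0 := by simp [mulRk]

lemma consL_mulRk (k l : ℕ+) (h : H1) : consL k (mulRk l h) = mulRk l (consL k h) := by
  simp [consL, mulRk, ← Finsupp.mapDomain_comp]
  rfl

lemma shtW_nil_left (v : List ℕ+) : shtW [] v = W v := by rw [shtW]

lemma shtW_cons_cons (k l : ℕ+) (u v : List ℕ+) :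
    shtW (k :: u) (l :: v) = consL k (shtW u (l :: v)) + consL l (shtW (k :: u) v) := by
  rw [shtW]

end Lemmas0
lemma sigW_zero (ks : List ℕ+) : sigW 0 ks = W ks := by
  induction ks with
  | nil => rw [sigW]; simp
  | cons k ks ih =>
      rw [sigW]
      have hp : pplus k 0 = k := by
        apply PNat.coe_injective; simp [pplus]
      simp [hp, ih, consL_W]

lemma shtW_nil_right (u : List ℕ+) : shtW u [] = W u := by
  cases u with
  | nil => rw [shtW]
  | cons k u => simp [shtW]
lemma pplus_one (k : ℕ+) : pplus k 1 = k + 1 := by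
  apply PNat.coe_injective; simp [pplus]

lemma sigW_one_cons (k : ℕ+) (ks : List ℕ+) :
    sigW 1 (k :: ks) = consL k (sigW 1 ks) + ((k : ℕ) : ℚ) • W ((k + 1) :: ks) := by
  rw [sigW]
  have hp : pplus k 0 = k := by apply PNat.coe_injective; simp [pplus]
  rw [Finset.sum_range_succ, Finset.sum_range_one]
  simp [hp, pplus_one, sigW_zero, consL_W, Nat.choose_one_right]

lemma sigW_one_nil : sigW 1 ([] : List ℕ+) = 0 := by rw [sigW]; simp

lemma sigW_one_append (u : List ℕ+) (a : ℕ+) :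
    sigW 1 (u ++ [a]) = mulRk a (sigW 1 u) + ((a : ℕ) : ℚ) • W (u ++ [a + 1]) := by
  induction u with
  | nil => simp [sigW_one_cons, sigW_one_nil, mulRk_zero, consL_zero, W]
  | cons k u ih =>
      rw [List.cons_append, sigW_one_cons, ih, consL_add, consL_smul, consL_mulRk,
        sigW_one_cons, mulRk_add, mulRk_smul, mulRk_W, consL_W]
      simp only [List.cons_append]
      abel

lemma sht_W_left (u : List ℕ+) (h : H1) :
    sht (W u) h = h.sum fun v d => d • shtW u v := by
  rw [sht, W, Finsupp.sum_single_index]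
  · simp
  · simp [Finsupp.sum]

lemma sht_W_W (u v : List ℕ+) : sht (W u) (W v) = shtW u v := by
  rw [sht_W_left, W, Finsupp.sum_single_index] <;> simp

lemma sht_W_nil_left (h : H1) : sht (W []) h = h := by
  rw [sht_W_left]
  conv_rhs => rw [← Finsupp.sum_single h]
  exact Finsupp.sum_congr fun v _ => by rw [shtW_nil_left, W, Finsupp.smul_single, smul_eq_mul, mul_one]

lemma sht_W_add (u : List ℕ+) (g h : H1) :
    sht (W u) (g + h) = sht (W u) g + sht (W u) h := by
  rw [sht_W_left, sht_W_left, sht_W_left]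
  exact Finsupp.sum_add_index' (by simp) (by intros; rw [add_smul])

lemma sht_W_smul (u : List ℕ+) (c : ℚ) (h : H1) :
    sht (W u) (c • h) = c • sht (W u) h := by
  rw [sht_W_left, sht_W_left, Finsupp.sum_smul_index (by simp), Finsupp.smul_sum]
  exact Finsupp.sum_congr fun v _ => by rw [mul_smul]

lemma sht_W_zero (u : List ℕ+) : sht (W u) (0 : H1) = 0 := by
  rw [sht_W_left]; simp

lemma sht_W_mulRk (u : List ℕ+) (b : ℕ+) (h : H1) :
    sht (W u) (mulRk b h) = h.sum fun v d => d • shtW u (v ++ [b]) := by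
  rw [sht_W_left, mulRk, Finsupp.sum_mapDomain_index (by simp) (by intros; rw [add_smul])]
lemma shtW_append_last (a b : ℕ+) :
    ∀ u v : List ℕ+, shtW (u ++ [a]) (v ++ [b]) =
      mulRk b (shtW (u ++ [a]) v) + mulRk a (shtW u (v ++ [b])) := by
  intro u
  induction u with
  | nil =>
      intro v
      induction v with
      | nil =>
          simp only [List.nil_append, shtW_cons_cons, shtW_nil_left, shtW_nil_right,
            consL_W, mulRk_W]
          abel
      | cons d v ihv =>
          simp only [List.nil_append] at ihv ⊢
          rw [List.cons_append, shtW_cons_cons, ihv, shtW_nil_left,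
            shtW_cons_cons, shtW_nil_left]
          simp only [shtW_nil_left, consL_add, consL_mulRk, consL_W, mulRk_add, mulRk_W,
            List.cons_append, List.append_assoc]
          abel
  | cons c u ihu =>
      intro v
      induction v with
      | nil =>
          simp only [List.cons_append, List.nil_append, shtW_cons_cons, shtW_nil_right] at ihu ⊢
          have ihu0 := ihu []
          simp only [List.nil_append] at ihu0 ⊢
          rw [ihu0]
          simp only [shtW_nil_right, shtW_nil_left, consL_add, consL_mulRk, mulRk_add,
            consL_W, mulRk_W, List.cons_append, List.append_assoc]
          abel
      | cons d v ihv =>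
          simp only [List.cons_append] at ihu ihv ⊢
          have ihu' := ihu (d :: v)
          simp only [List.cons_append] at ihu'
          rw [shtW_cons_cons, ihu', ihv,
            shtW_cons_cons (k := c) (l := d) (u := u ++ [a]) (v := v),
            shtW_cons_cons (k := c) (l := d) (u := u) (v := v ++ [b])]
          simp only [consL_add, consL_mulRk, mulRk_add]
          abel
lemma mulRk_finsupp_sum (k : ℕ+) (h : H1) (f : List ℕ+ → ℚ → H1) :
    mulRk k (h.sum f) = h.sum fun v d => mulRk k (f v d) := by
  classical
  exact map_sum (Finsupp.mapDomain.addMonoidHom (fun w => w ++ [k])) _ _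

lemma sht_W_append_mulRk (u : List ℕ+) (a b : ℕ+) (h : H1) :
    sht (W (u ++ [a])) (mulRk b h) =
      mulRk b (sht (W (u ++ [a])) h) + mulRk a (sht (W u) (mulRk b h)) := by
  rw [sht_W_mulRk, sht_W_mulRk, sht_W_left, mulRk_finsupp_sum, mulRk_finsupp_sum,
    ← Finsupp.sum_add]
  refine Finsupp.sum_congr fun v _ => ?_
  rw [shtW_append_last, smul_add, mulRk_smul, mulRk_smul]

lemma A_decomp (u w : List ℕ+) (a b : ℕ+) :
    sht (W (u ++ [a])) (sigW 1 (w ++ [b])) =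
      mulRk b (sht (W (u ++ [a])) (sigW 1 w))
      + ((b : ℕ) : ℚ) • mulRk (b + 1) (sht (W (u ++ [a])) (W w))
      + mulRk a (sht (W u) (sigW 1 (w ++ [b]))) := by
  rw [sigW_one_append, sht_W_add, sht_W_smul, sht_W_W, sht_W_append_mulRk,
    shtW_append_last, sht_W_add, sht_W_smul, sht_W_W, mulRk_add, mulRk_smul, smul_add]
  rw [sht_W_W]
  abel
lemma take_succ_eq (ks : List ℕ+) (j : ℕ) (hj : j < ks.length) :
    ks.take (j + 1) = ks.take j ++ [ks.getD j 1] := by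
  rw [List.getD_eq_getElem ks 1 hj, ← List.take_concat_get hj, List.concat_eq_append]

lemma drop_rev_eq (ks : List ℕ+) (j : ℕ) (hj : j < ks.length) :
    (ks.drop j).reverse = (ks.drop (j + 1)).reverse ++ [ks.getD j 1] := by
  rw [List.getD_eq_getElem ks 1 hj, List.drop_eq_getElem_cons hj, List.reverse_cons]

lemma key (ks : List ℕ+) : ∀ j, j < ks.length →
    ∑ i ∈ Finset.range (j + 1),
        ((-1 : ℚ)) ^ (ks.length - i) • sht (W (ks.take i)) (sigW 1 ((ks.drop i).reverse))
    = (∑ m ∈ Finset.range (j + 1),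
        (((ks.getD m 1 : ℕ) : ℚ) * (-1) ^ (ks.length - m)) •
          mulRk (ks.getD m 1 + 1) (sht (W (ks.take m)) (W ((ks.drop (m + 1)).reverse))))
      + ((-1 : ℚ)) ^ (ks.length - j) •
          mulRk (ks.getD j 1) (sht (W (ks.take j)) (sigW 1 ((ks.drop (j + 1)).reverse))) := by
  intro j
  induction j with
  | zero =>
      intro hj
      rw [Finset.sum_range_one, Finset.sum_range_one]
      rw [List.take_zero, drop_rev_eq ks 0 hj, sht_W_nil_left,
        sigW_one_append, sht_W_nil_left, sht_W_nil_left, mulRk_W]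
      simp only [Nat.sub_zero, smul_add, smul_smul]
      rw [mul_comm (((-1 : ℚ)) ^ ks.length)]
      abel
  | succ j ih =>
      intro hj
      have hj' : j < ks.length := Nat.lt_of_succ_lt hj
      rw [Finset.sum_range_succ, ih hj', Finset.sum_range_succ (n := j + 1)]
      rw [take_succ_eq ks j hj', drop_rev_eq ks (j+1) hj, A_decomp, ← take_succ_eq ks j hj',
        ← drop_rev_eq ks (j+1) hj]
      have hs : ks.length - j = (ks.length - (j + 1)) + 1 := by omega
      rw [hs, pow_succ, mul_neg_one, neg_smul, smul_add, smul_add, smul_smul,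
        mul_comm (((-1 : ℚ)) ^ (ks.length - (j+1)))]
      abel
/-- for all positive integers `k₁,…,k_r`,
`ψ̄(z_{k₁}⋯z_{k_r}) = Σ_{i=1}^{r} (-1)^{r-i+1} k_i (z_{k₁}⋯z_{k_{i-1}} ш̃ z_{k_r}⋯z_{k_{i+1}}) z_{k_i+1}`. -/
theorem psib_formula (ks : List ℕ+) :
    psib (W ks) =
      ∑ j : Fin ks.length,
        (((ks.get j : ℕ) : ℚ) * (-1) ^ (ks.length - (j : ℕ))) •
          mulRk (ks.get j + 1)
            (sht (W (ks.take (j : ℕ))) (W ((ks.drop ((j : ℕ) + 1)).reverse))) := by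
  have h0 : psib (W ks) = psibW ks := by
    rw [psib, W]
    rw [Finsupp.sum_single_index]
    · exact one_smul _ _
    · exact zero_smul _ _
  rw [h0, psibW]
  rcases Nat.eq_zero_or_pos ks.length with h | h
  · have hnil : ks = [] := List.length_eq_zero_iff.mp h
    subst hnil
    simp
  · have hj : ks.length - 1 < ks.length := by omega
    have hk := key ks (ks.length - 1) hj
    have hlen : ks.length - 1 + 1 = ks.length := by omega
    rw [hlen] at hk
    rw [hk, List.drop_length, List.reverse_nil, sigW_one_nil, sht_W_zero, mulRk_zero,
      smul_zero, add_zero,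
      Finset.sum_range (fun m =>
        (((ks.getD m 1 : ℕ) : ℚ) * (-1) ^ (ks.length - m)) •
          mulRk (ks.getD m 1 + 1)
            (sht (W (ks.take m)) (W ((ks.drop (m + 1)).reverse))))]
    refine Finset.sum_congr rfl fun j _ => ?_
    beta_reduce
    rw [List.getD_eq_getElem ks 1 j.isLt, List.get_eq_getElem]
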